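/- For any integer T ≥ 1 and r > 1, with A = log(2 r^{T+1})/(r-1) and B = T/(r+1), if r > θ (the unique solution of log(2θ^{T+1})/(θ-1) = T) then A < T and B < T/2, and consequently 𝕃(A,B) ≤ (1/4) e^{-T} T^T/T! + (3/64) e^{-T/2}(T/2)^T/T!, where 𝕃(x,y) = e^{-x}(x^T/T!)(x/(8(T+1)) + 1/(8r)) + e^{-y}(y^T/T!)(y/(16(T+1)) + 1/(16r) - 1/(16r²)). -/

import Mathlib

set_option maxHeartbeats 800000


open Real

/-- The lower bound function `𝕃(x,y)` from the paper, for threshold `T` and ratio `r`. -/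
noncomputable def lowerBoundFun (T : ℕ) (r x y : ℝ) : ℝ :=
  Real.exp (-x) * (x ^ T / (Nat.factorial T)) * (x / (8 * (T + 1)) + 1 / (8 * r))
    + Real.exp (-y) * (y ^ T / (Nat.factorial T)) *
        (y / (16 * (T + 1)) + 1 / (16 * r) - 1 / (16 * r ^ 2))

/-- Monotonicity of `e^{-x} x^T` on `[0, T]`. -/
lemma exp_neg_mul_pow_mono (T : ℕ) (hT : 1 ≤ T) (x y : ℝ) (hx : 0 ≤ x) (hxy : x ≤ y)
    (hyT : y ≤ (T : ℝ)) : Real.exp (-x) * x ^ T ≤ Real.exp (-y) * y ^ T := by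
  rcases eq_or_lt_of_le hx with h0 | h0
  · rw [← h0, zero_pow (by omega), mul_zero]
    have hy : (0:ℝ) ≤ y := le_trans hx hxy
    positivity
  · have hy : 0 < y := lt_of_lt_of_le h0 hxy
    have hlog : Real.log (x / y) ≤ x / y - 1 := Real.log_le_sub_one_of_pos (by positivity)
    have key : (T : ℝ) * Real.log (x / y) ≤ x - y := by
      have h1 : (T : ℝ) * Real.log (x / y) ≤ (T : ℝ) * (x / y - 1) :=
        mul_le_mul_of_nonneg_left hlog (by positivity)
      have h2 : (T : ℝ) * (x / y - 1) = ((T : ℝ) / y) * (x - y) := by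
        field_simp
      have hTy : (1:ℝ) ≤ (T : ℝ) / y := by rw [le_div_iff₀ hy]; linarith
      have h3 : ((T : ℝ) / y) * (x - y) ≤ x - y := by nlinarith
      linarith [h2 ▸ h1]
    have hp : (x / y) ^ T ≤ Real.exp (x - y) := by
      rw [← Real.exp_log (show (0:ℝ) < (x / y) ^ T by positivity)]
      apply Real.exp_le_exp.mpr
      rw [Real.log_pow]
      exact key
    have hxT : x ^ T = (x / y) ^ T * y ^ T := by
      rw [div_pow]; field_simp
    have hexp : Real.exp (-x) * Real.exp (x - y) = Real.exp (-y) := by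
      rw [← Real.exp_add]; congr 1; ring
    calc Real.exp (-x) * x ^ T = Real.exp (-x) * ((x / y) ^ T * y ^ T) := by rw [← hxT]
      _ ≤ Real.exp (-x) * (Real.exp (x - y) * y ^ T) := by
          apply mul_le_mul_of_nonneg_left _ (Real.exp_pos _).le
          exact mul_le_mul_of_nonneg_right hp (by positivity)
      _ = Real.exp (-y) * y ^ T := by rw [← mul_assoc, hexp]

theorem lowerBoundFun_upper_estimate (T : ℕ) (hT : 1 ≤ T) (r θ : ℝ) (hθ1 : 1 < θ)
    (hθ : Real.log (2 * θ ^ (T + 1)) / (θ - 1) = (T : ℝ)) (hr : θ < r)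
    (A B : ℝ) (hA : A = Real.log (2 * r ^ (T + 1)) / (r - 1)) (hB : B = (T : ℝ) / (r + 1)) :
    A < (T : ℝ) ∧ B < (T : ℝ) / 2 ∧
      lowerBoundFun T r A B ≤
        (1 / 4) * Real.exp (-(T : ℝ)) * (T : ℝ) ^ T / (Nat.factorial T)
          + (3 / 64) * Real.exp (-((T : ℝ) / 2)) * ((T : ℝ) / 2) ^ T / (Nat.factorial T) := by
  have hr1 : 1 < r := hθ1.trans hr
  have hθ0 : (0:ℝ) < θ := by linarith
  have hr0 : (0:ℝ) < r := by linarith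
  have hT1 : (1:ℝ) ≤ (T : ℝ) := by exact_mod_cast hT
  have hlog2 : (0:ℝ) < Real.log 2 := Real.log_pos one_lt_two
  -- expand logs
  have hlogθexp : Real.log (2 * θ ^ (T + 1)) = Real.log 2 + (T + 1 : ℝ) * Real.log θ := by
    rw [Real.log_mul (by norm_num) (by positivity), Real.log_pow]
    push_cast; ring
  have hlogrexp : Real.log (2 * r ^ (T + 1)) = Real.log 2 + (T + 1 : ℝ) * Real.log r := by
    rw [Real.log_mul (by norm_num) (by positivity), Real.log_pow]
    push_cast; ring
  have hθeq : Real.log 2 + (T + 1 : ℝ) * Real.log θ = (T : ℝ) * (θ - 1) := by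
    rw [← hlogθexp]
    have h1 : θ - 1 ≠ 0 := by intro h; rw [sub_eq_zero] at h; exact absurd h.symm hθ1.ne
    field_simp at hθ
    linarith [hθ]
  -- θ > (T+1)/T, i.e. T+1 < T*θ
  have hlogθlb : θ - 1 < θ * Real.log θ := by
    have h := Real.log_lt_sub_one_of_pos (show (0:ℝ) < 1/θ by positivity)
      (by intro h; rw [div_eq_one_iff_eq (by linarith)] at h; linarith)
    rw [Real.log_div one_ne_zero (by linarith), Real.log_one] at h
    have h' : -Real.log θ < 1/θ - 1 := by linarith
    have hmul := mul_lt_mul_of_pos_left h' hθ0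
    have hinv : θ * (1/θ) = 1 := by field_simp
    nlinarith [hmul, hinv]
  have hTθ : (T : ℝ) + 1 < (T : ℝ) * θ := by
    nlinarith [hθeq, hlogθlb, hlog2, mul_pos (sub_pos.mpr hθ1) hθ0]
  -- A < T
  have hlogrθ : θ * (Real.log r - Real.log θ) < r - θ := by
    have h := Real.log_lt_sub_one_of_pos (show (0:ℝ) < r/θ by positivity)
      (by intro h; rw [div_eq_one_iff_eq (by linarith)] at h; linarith)
    rw [Real.log_div (by linarith) (by linarith)] at h
    have hmul := mul_lt_mul_of_pos_left h hθ0
    have hinv : θ * (r/θ) = r := by field_simp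
    nlinarith [hmul, hinv]
  have hnum : Real.log 2 + (T + 1 : ℝ) * Real.log r < (T : ℝ) * (r - 1) := by
    have hd : 0 < Real.log r - Real.log θ := by
      have := Real.log_lt_log hθ0 hr
      linarith
    nlinarith [hθeq, hlogrθ, hTθ, mul_pos (sub_pos.mpr hr) hθ0]
  have hAT : A < (T : ℝ) := by
    rw [hA, hlogrexp, div_lt_iff₀ (by linarith : (0:ℝ) < r - 1)]
    nlinarith
  have hA0 : 0 ≤ A := by
    rw [hA]
    apply div_nonneg _ (by linarith)
    apply Real.log_nonneg
    nlinarith [one_le_pow₀ (le_of_lt hr1) (n := T + 1)]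
  have hB0 : 0 ≤ B := by rw [hB]; positivity
  have hBT : B < (T : ℝ) / 2 := by
    rw [hB, div_lt_div_iff₀ (by linarith) (by norm_num)]
    nlinarith
  refine ⟨hAT, hBT, ?_⟩
  have hfac : (0:ℝ) < (Nat.factorial T : ℝ) := by exact_mod_cast Nat.factorial_pos T
  -- first term
  have E1 : Real.exp (-A) * A ^ T ≤ Real.exp (-(T:ℝ)) * (T:ℝ) ^ T :=
    exp_neg_mul_pow_mono T hT A (T:ℝ) hA0 hAT.le le_rfl
  have E1' : Real.exp (-A) * (A ^ T / (Nat.factorial T))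
      ≤ Real.exp (-(T:ℝ)) * ((T:ℝ) ^ T / (Nat.factorial T)) := by
    rw [mul_div_assoc', mul_div_assoc']
    exact div_le_div_of_nonneg_right E1 hfac.le
  have F1 : A / (8 * ((T:ℝ) + 1)) + 1 / (8 * r) ≤ 1 / 4 := by
    have h1 : A / (8 * ((T:ℝ) + 1)) ≤ 1 / 8 := by
      rw [div_le_div_iff₀ (by positivity) (by norm_num)]
      nlinarith
    have h2 : 1 / (8 * r) ≤ 1 / 8 := by
      rw [div_le_div_iff₀ (by positivity) (by norm_num)]
      nlinarith
    linarith
  have F1nn : 0 ≤ A / (8 * ((T:ℝ) + 1)) + 1 / (8 * r) := by positivity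
  have term1 : Real.exp (-A) * (A ^ T / (Nat.factorial T)) * (A / (8 * ((T:ℝ) + 1)) + 1 / (8 * r))
      ≤ Real.exp (-(T:ℝ)) * ((T:ℝ) ^ T / (Nat.factorial T)) * (1 / 4) :=
    mul_le_mul E1' F1 F1nn (by positivity)
  -- second term
  have E2 : Real.exp (-B) * B ^ T ≤ Real.exp (-((T:ℝ)/2)) * ((T:ℝ)/2) ^ T :=
    exp_neg_mul_pow_mono T hT B ((T:ℝ)/2) hB0 hBT.le (by linarith)
  have E2' : Real.exp (-B) * (B ^ T / (Nat.factorial T))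
      ≤ Real.exp (-((T:ℝ)/2)) * (((T:ℝ)/2) ^ T / (Nat.factorial T)) := by
    rw [mul_div_assoc', mul_div_assoc']
    exact div_le_div_of_nonneg_right E2 hfac.le
  have F2 : B / (16 * ((T:ℝ) + 1)) + 1 / (16 * r) - 1 / (16 * r ^ 2) ≤ 3 / 64 := by
    have h1 : B / (16 * ((T:ℝ) + 1)) ≤ 1 / 32 := by
      rw [div_le_div_iff₀ (by positivity) (by norm_num)]
      nlinarith
    have h2 : 1 / (16 * r) - 1 / (16 * r ^ 2) ≤ 1 / 64 := by
      have e1 : 1 / (16 * r) - 1 / (16 * r ^ 2) = (r - 1) / (16 * r ^ 2) := by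
        field_simp
      rw [e1, div_le_div_iff₀ (by positivity) (by norm_num)]
      nlinarith [sq_nonneg (r - 2)]
    linarith
  have F2nn : 0 ≤ B / (16 * ((T:ℝ) + 1)) + 1 / (16 * r) - 1 / (16 * r ^ 2) := by
    have h1 : 1 / (16 * r ^ 2) ≤ 1 / (16 * r) := by
      rw [div_le_div_iff₀ (by positivity) (by positivity)]
      nlinarith
    have h2 : 0 ≤ B / (16 * ((T:ℝ) + 1)) := by positivity
    linarith
  have term2 : Real.exp (-B) * (B ^ T / (Nat.factorial T)) *
        (B / (16 * ((T:ℝ) + 1)) + 1 / (16 * r) - 1 / (16 * r ^ 2))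
      ≤ Real.exp (-((T:ℝ)/2)) * (((T:ℝ)/2) ^ T / (Nat.factorial T)) * (3 / 64) :=
    mul_le_mul E2' F2 F2nn (by positivity)
  have hsum := add_le_add term1 term2
  unfold lowerBoundFun
  calc Real.exp (-A) * (A ^ T / (Nat.factorial T)) * (A / (8 * ((T:ℝ) + 1)) + 1 / (8 * r))
        + Real.exp (-B) * (B ^ T / (Nat.factorial T)) *
            (B / (16 * ((T:ℝ) + 1)) + 1 / (16 * r) - 1 / (16 * r ^ 2))
      ≤ Real.exp (-(T:ℝ)) * ((T:ℝ) ^ T / (Nat.factorial T)) * (1 / 4)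
        + Real.exp (-((T:ℝ)/2)) * (((T:ℝ)/2) ^ T / (Nat.factorial T)) * (3 / 64) := hsum
    _ = (1 / 4) * Real.exp (-(T : ℝ)) * (T : ℝ) ^ T / (Nat.factorial T)
          + (3 / 64) * Real.exp (-((T : ℝ) / 2)) * ((T : ℝ) / 2) ^ T / (Nat.factorial T) := by
        ring
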